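/- Let T be the rooted 7-ary tree (the simple graph on List (Fin 7) in which two words are adjacent iff one is obtained from the other by prepending a single letter). For every p with 1/7 < p < 1, μ_p-almost surely the set of infinite connected components of the open subgraph of T is infinite. -/

import Mathlib

open MeasureTheory
open scoped ENNReal

/-- The Bernoulli measure on `Bool` with parameter `p ≤ 1`:
it assigns mass `p` to `true` and `1 - p` to `false`. -/
noncomputable abbrev bernoulliMeasure (p : ℝ≥0∞) (hp : p ≤ 1) : Measure Bool :=
  (PMF.bernoulli p.toNNReal (by simpa using ENNReal.toNNReal_mono ENNReal.one_ne_top hp)).toMeasure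

/-- The family of finite-dimensional distributions of the i.i.d. Bernoulli(`p`) field
indexed by `ι`: to each finite set `J ⊆ ι` it assigns the finite product of
Bernoulli(`p`) measures.  A measure `μ` on `ι → Bool` is the infinite product of
Bernoulli(`p`) measures (the Bernoulli(`p`) site-percolation measure `μ_p`) exactly
when it is the projective limit of this family. -/
noncomputable def bernoulliPiFamily (ι : Type*) (p : ℝ≥0∞) (hp : p ≤ 1) :
    ∀ J : Finset ι, Measure (∀ _ : J, Bool) :=
  fun _J => Measure.pi fun _ => bernoulliMeasure p hp

/-- The rooted 7-ary tree: vertices are finite words over a 7-letter alphabet,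
two words being adjacent iff one is obtained from the other by prepending a letter. -/
def treeGraph : SimpleGraph (List (Fin 7)) :=
  SimpleGraph.fromRel fun x y => ∃ a : Fin 7, x = a :: y

/-!
Write `spine n = 0ⁿ` and `sprout n = 1 :: 0ⁿ`, a child of `spine n` off the spine. If `spine n`
is closed while `sprout n` is joined by open vertices of its own subtree to every depth, then the
open cluster of `sprout n` is infinite and cannot leave that subtree, so different such `n` give
different infinite clusters. The probability `q m` that a vertex reaches depth `m` inside its
subtree obeys `q (m + 1) = p (1 - (1 - q m) ^ 7)`, which keeps it above a constant `c > 0` as soon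
as `7p > 1`. The events for different `n` depend on the disjoint vertex sets
`{spine n} ∪ subtree (sprout n)`, so they are independent with probabilities at least
`(1 - p) c`, and by the second Borel–Cantelli lemma infinitely many of them occur almost surely.
-/

open ProbabilityTheory Function Filter

theorem ProbabilityTheory.iIndep.iSup_of_pairwise_disjoint {Ω ι κ : Type*}
    {mΩ : MeasurableSpace Ω} {μ : Measure Ω} {m : ι → MeasurableSpace Ω}
    (h_le : ∀ i, m i ≤ mΩ) (h_indep : iIndep m μ) {S : κ → Set ι}
    (hS : Pairwise (Disjoint on S)) :
    iIndep (fun k ↦ ⨆ i ∈ S k, m i) μ := by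
  classical
  have := h_indep.isProbabilityMeasure
  refine (iIndep_iff _ μ).2 fun F ↦ ?_
  induction F using Finset.induction with
  | empty => simp
  | insert k F hk ih =>
    intro f hf
    have h_rest : MeasurableSet[⨆ i ∈ ⋃ j ∈ F, S j, m i] (⋂ j ∈ F, f j) :=
      .biInter F.countable_toSet fun j hj ↦
        (biSup_mono (Set.subset_biUnion_of_mem hj) : ⨆ i ∈ S j, m i ≤ _) _
          (hf j (Finset.mem_insert_of_mem hj))
    have h_disj : Disjoint (S k) (⋃ j ∈ F, S j) :=
      Set.disjoint_iUnion₂_right.2 fun j hj ↦ hS (ne_of_mem_of_not_mem hj hk).symm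
    rw [Finset.set_biInter_insert, Finset.prod_insert hk,
      (Indep_iff _ _ μ).1 (indep_iSup_of_disjoint h_le h_indep h_disj) _ _
        (hf k (Finset.mem_insert_self k F)) h_rest,
      ih fun j hj ↦ hf j (Finset.mem_insert_of_mem hj)]

namespace SitePercolation

theorem measurableSet_setOf_eq_cylinderEvents {ι : Type*} {Δ : Set ι} {v : ι} (hv : v ∈ Δ)
    (b : Bool) :
    MeasurableSet[cylinderEvents Δ] {ω : ι → Bool | ω v = b} :=
  measurable_cylinderEvent_apply (X := fun _ ↦ Bool) hv (measurableSet_singleton b)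

section BernoulliField

variable {ι : Type*} {p : ℝ≥0∞} {hp : p ≤ 1} {μ : Measure (ι → Bool)}

theorem eq_infinitePi_bernoulli
    (hμ : IsProjectiveLimit μ (bernoulliPiFamily ι p hp)) :
    μ = Measure.infinitePi fun _ ↦ _root_.bernoulliMeasure p hp :=
  ((Measure.isProjectiveLimit_infinitePi _).unique hμ).symm

variable (hμ : IsProjectiveLimit μ (bernoulliPiFamily ι p hp))
include hμ

theorem isProbabilityMeasure_bernoulli : IsProbabilityMeasure μ := by
  rw [eq_infinitePi_bernoulli hμ]; infer_instance

theorem measure_eval_preimage (v : ι) (s : Set Bool) :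
    μ ((fun ω ↦ ω v) ⁻¹' s) = _root_.bernoulliMeasure p hp s := by
  rw [← Measure.map_apply (measurable_pi_apply v) (.of_discrete), eq_infinitePi_bernoulli hμ,
    Measure.infinitePi_map_eval]

theorem measure_setOf_open (v : ι) : μ {ω | ω v = true} = p := by
  rw [show {ω : ι → Bool | ω v = true} = (fun ω ↦ ω v) ⁻¹' {true} from rfl,
    measure_eval_preimage hμ, PMF.toMeasure_apply_singleton _ _ (measurableSet_singleton _)]
  exact ENNReal.coe_toNNReal (ne_top_of_le_ne_top ENNReal.one_ne_top hp)

theorem measure_setOf_closed (v : ι) : μ {ω | ω v = false} = 1 - p := by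
  rw [show {ω : ι → Bool | ω v = false} = (fun ω ↦ ω v) ⁻¹' {false} from rfl,
    measure_eval_preimage hμ, PMF.toMeasure_apply_singleton _ _ (measurableSet_singleton _)]
  change ((1 - p.toNNReal : NNReal) : ℝ≥0∞) = 1 - p
  rw [ENNReal.coe_sub, ENNReal.coe_one,
    ENNReal.coe_toNNReal (ne_top_of_le_ne_top ENNReal.one_ne_top hp)]

theorem iIndep_comap_eval :
    iIndep (fun i ↦ MeasurableSpace.comap (fun ω : ι → Bool ↦ ω i) inferInstance) μ := by
  rw [← iIndepFun_iff_iIndep, eq_infinitePi_bernoulli hμ]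
  exact iIndepFun_infinitePi (X := fun _ b ↦ b) fun _ ↦ measurable_id

theorem iIndep_cylinderEvents {κ : Type*} {S : κ → Set ι}
    (hS : Pairwise (Disjoint on S)) : iIndep (fun k ↦ cylinderEvents (S k)) μ :=
  (iIndep_comap_eval hμ).iSup_of_pairwise_disjoint (fun i ↦ (measurable_pi_apply i).comap_le) hS

theorem indep_cylinderEvents {S T : Set ι} (hST : Disjoint S T) :
    Indep (cylinderEvents S) (cylinderEvents T) μ :=
  indep_iSup_of_disjoint (fun i ↦ (measurable_pi_apply i).comap_le) (iIndep_comap_eval hμ) hST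

end BernoulliField

section Words

variable {α : Type*}

def subtree (u : List α) : Set (List α) := {v | u <:+ v}

theorem mem_subtree_self (u : List α) : u ∈ subtree u := List.suffix_refl u

theorem disjoint_subtree {u v : List α} (huv : ¬u <:+ v) (hvu : ¬v <:+ u) :
    Disjoint (subtree u) (subtree v) :=
  Set.disjoint_left.2 fun _ hu hv ↦ (List.suffix_or_suffix_of_suffix hu hv).elim huv hvu

theorem cons_suffix_cons_iff {a b : α} {u : List α} : a :: u <:+ b :: u ↔ a = b :=
  ⟨fun h ↦ (List.cons.inj (h.eq_of_length rfl)).1, fun h ↦ h ▸ List.suffix_refl _⟩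

theorem pairwise_disjoint_subtree_cons (u : List α) :
    Pairwise (Disjoint on fun a : α ↦ subtree (a :: u)) := fun _ _ hab ↦
  disjoint_subtree (mt cons_suffix_cons_iff.1 hab) (mt cons_suffix_cons_iff.1 (Ne.symm hab))

theorem notMem_subtree_cons (a : α) (u : List α) : u ∉ subtree (a :: u) := fun h ↦ by
  simpa using h.length_le

theorem subtree_cons_subset (a : α) (u : List α) : subtree (a :: u) ⊆ subtree u :=
  fun _ h ↦ (List.suffix_cons a u).trans h

def ReachesDepth (ω : List α → Bool) : List α → ℕ → Prop
  | u, 0 => ω u = true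
  | u, m + 1 => ω u = true ∧ ∃ a, ReachesDepth ω (a :: u) m

variable {ω : List α → Bool}

theorem ReachesDepth.apply_eq_true {u : List α} : ∀ {m}, ReachesDepth ω u m → ω u = true
  | 0, h => h
  | _ + 1, h => h.1

theorem ReachesDepth.of_succ {m : ℕ} :
    ∀ {u : List α}, ReachesDepth ω u (m + 1) → ReachesDepth ω u m := by
  induction m with
  | zero => exact fun h ↦ h.1
  | succ m ih => exact fun ⟨hu, a, ha⟩ ↦ ⟨hu, a, ih ha⟩

theorem setOf_reachesDepth_succ (u : List α) (m : ℕ) :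
    {ω : List α → Bool | ReachesDepth ω u (m + 1)} =
      {ω | ω u = true} ∩ ⋃ a, {ω | ReachesDepth ω (a :: u) m} := by
  ext; simp [ReachesDepth]

theorem measurableSet_reachesDepth [Countable α] (m : ℕ) :
    ∀ u : List α, MeasurableSet[cylinderEvents (subtree u)] {ω | ReachesDepth ω u m} := by
  induction m with
  | zero => exact fun u ↦ measurableSet_setOf_eq_cylinderEvents (mem_subtree_self u) true
  | succ m ih =>
    intro u
    have h_children :
        MeasurableSet[cylinderEvents (subtree u)] (⋃ a, {ω | ReachesDepth ω (a :: u) m}) :=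
      .iUnion fun a ↦ cylinderEvents_mono (subtree_cons_subset a u) _ (ih (a :: u))
    rw [setOf_reachesDepth_succ]
    exact (measurableSet_setOf_eq_cylinderEvents (mem_subtree_self u) true).inter h_children

theorem measurableSet_forall_reachesDepth [Countable α] (u : List α) :
    MeasurableSet[cylinderEvents (subtree u)] {ω | ∀ m, ReachesDepth ω u m} := by
  rw [Set.ofPred_forall]
  exact .iInter fun m ↦ measurableSet_reachesDepth m u

end Words

section Survival

variable {α : Type*} [Fintype α] {p : ℝ≥0∞} {hp : p ≤ 1} {μ : Measure (List α → Bool)}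
  (hμ : IsProjectiveLimit μ (bernoulliPiFamily (List α) p hp))
include hμ

theorem measure_reachesDepth_succ (u : List α) (m : ℕ) :
    μ {ω | ReachesDepth ω u (m + 1)} =
      p * (1 - ∏ a, (1 - μ {ω | ReachesDepth ω (a :: u) m})) := by
  have := isProbabilityMeasure_bernoulli hμ
  set R : α → Set (List α → Bool) := fun a ↦ {ω | ReachesDepth ω (a :: u) m}
  have h_meas (a : α) : MeasurableSet[cylinderEvents (subtree (a :: u))] (R a) :=
    measurableSet_reachesDepth m (a :: u)
  have h_none : μ (⋃ a, R a)ᶜ = ∏ a, (1 - μ (R a)) := by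
    rw [Set.compl_iUnion, (iIndep_cylinderEvents hμ (pairwise_disjoint_subtree_cons u)).meas_iInter
      fun a ↦ (h_meas a).compl]
    exact Finset.prod_congr rfl fun a _ ↦
      prob_compl_eq_one_sub (cylinderEvents_le_pi _ (h_meas a))
  have h_some : μ (⋃ a, R a) = 1 - ∏ a, (1 - μ (R a)) := by
    rw [← h_none, prob_compl_eq_one_sub (.iUnion fun a ↦ cylinderEvents_le_pi _ (h_meas a)),
      ENNReal.sub_sub_cancel ENNReal.one_ne_top prob_le_one]
  have h_disj : Disjoint {u} (⋃ a, subtree (a :: u)) := by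
    rw [Set.disjoint_singleton_left, Set.mem_iUnion, not_exists]
    exact fun a ↦ notMem_subtree_cons a u
  have h_open : MeasurableSet[cylinderEvents {u}] {ω : List α → Bool | ω u = true} :=
    measurableSet_setOf_eq_cylinderEvents (Set.mem_singleton u) true
  have h_children : MeasurableSet[cylinderEvents (⋃ a, subtree (a :: u))] (⋃ a, R a) :=
    .iUnion fun a ↦
      cylinderEvents_mono (Set.subset_iUnion (fun a ↦ subtree (a :: u)) a) _ (h_meas a)
  rw [setOf_reachesDepth_succ,
    (Indep_iff _ _ μ).1 (indep_cylinderEvents hμ h_disj) _ _ h_open h_children,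
    measure_setOf_open hμ, h_some]

theorem le_measure_reachesDepth {c : ℝ≥0∞} (hcp : c ≤ p)
    (hc : c ≤ p * (1 - (1 - c) ^ Fintype.card α)) (m : ℕ) (u : List α) :
    c ≤ μ {ω | ReachesDepth ω u m} := by
  induction m generalizing u with
  | zero => exact (measure_setOf_open hμ u).symm ▸ hcp
  | succ m ih =>
    have h_none :
        ∏ a, (1 - μ {ω | ReachesDepth ω (a :: u) m}) ≤ (1 - c) ^ Fintype.card α := by
      rw [← Finset.card_univ, ← Finset.prod_const]
      exact Finset.prod_le_prod' fun a _ ↦ tsub_le_tsub_left (ih (a :: u)) 1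
    rw [measure_reachesDepth_succ hμ]
    exact hc.trans (mul_le_mul_right (tsub_le_tsub_left h_none 1) p)

theorem le_measure_forall_reachesDepth {c : ℝ≥0∞} (hcp : c ≤ p)
    (hc : c ≤ p * (1 - (1 - c) ^ Fintype.card α)) (u : List α) :
    c ≤ μ {ω | ∀ m, ReachesDepth ω u m} := by
  have := isProbabilityMeasure_bernoulli hμ
  have h_anti : Antitone fun m ↦ {ω : List α → Bool | ReachesDepth ω u m} :=
    antitone_nat_of_succ_le fun _ _ h ↦ h.of_succ
  rw [Set.ofPred_forall, h_anti.measure_iInter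
    (fun m ↦ (cylinderEvents_le_pi _ (measurableSet_reachesDepth m u)).nullMeasurableSet)
    ⟨0, measure_ne_top μ _⟩]
  exact le_iInf fun m ↦ le_measure_reachesDepth hμ hcp hc m u

end Survival

theorem exists_le_mul_one_sub_one_sub_pow_seven {p : ℝ≥0∞} (hp₁ : 1 / 7 < p)
    (hp₂ : p ≤ 1) :
    ∃ c : ℝ≥0∞, c ≠ 0 ∧ c ≤ p ∧ c ≤ p * (1 - (1 - c) ^ 7) := by
  have hp_top : p ≠ ∞ := ne_top_of_le_ne_top ENNReal.one_ne_top hp₂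
  set x := p.toReal
  have hx₁ : 1 / 7 < x := by
    simpa using ENNReal.toReal_strict_mono hp_top hp₁
  have hx₂ : x ≤ 1 := by
    simpa using ENNReal.toReal_mono ENNReal.one_ne_top hp₂
  -- any `0 < c ≤ (7x - 1) / (21x)` works, through `(1 - c) ^ 7 ≤ 1 - 7c + 21c²`
  set c : ℝ := (7 * x - 1) / 42 with hc
  have hc₀ : 0 < c := by rw [hc]; linarith
  have hc₁ : c ≤ 1 := by rw [hc]; linarith
  have h_taylor : (1 - c) ^ 7 ≤ 1 - 7 * c + 21 * c ^ 2 := by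
    nlinarith [pow_pos hc₀ 3, pow_pos hc₀ 4, pow_pos hc₀ 5, pow_pos hc₀ 6, pow_pos hc₀ 7]
  have h_key : c ≤ x * (1 - (1 - c) ^ 7) :=
    calc c ≤ x * (7 * c - 21 * c ^ 2) := by
          nlinarith [mul_pos (mul_pos hc₀ hc₀) (by linarith : 0 < 2 - x)]
      _ ≤ x * (1 - (1 - c) ^ 7) := mul_le_mul_of_nonneg_left (by linarith) (by linarith)
  have h_one_sub : (1 : ℝ≥0∞) - ENNReal.ofReal c = ENNReal.ofReal (1 - c) := by
    rw [ENNReal.ofReal_sub _ hc₀.le, ENNReal.ofReal_one]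
  have h_rhs : p * (1 - (1 - ENNReal.ofReal c) ^ 7) = ENNReal.ofReal (x * (1 - (1 - c) ^ 7)) := by
    rw [h_one_sub, ← ENNReal.ofReal_pow (by linarith), ← ENNReal.ofReal_one,
      ← ENNReal.ofReal_sub _ (by positivity), ENNReal.ofReal_mul ENNReal.toReal_nonneg,
      ENNReal.ofReal_toReal hp_top]
  refine ⟨ENNReal.ofReal c, (ENNReal.ofReal_pos.2 hc₀).ne', ?_, ?_⟩
  · exact (ENNReal.ofReal_le_iff_le_toReal hp_top).2 (by rw [hc]; linarith)
  · exact h_rhs ▸ ENNReal.ofReal_le_ofReal h_key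

section CutOffSurvivors

def spine (n : ℕ) : List (Fin 7) := List.replicate n 0

def sprout (n : ℕ) : List (Fin 7) := 1 :: spine n

theorem not_sprout_suffix_spine (n k : ℕ) : ¬sprout n <:+ spine k := fun h ↦
  absurd (List.eq_of_mem_replicate (h.subset List.mem_cons_self)) (by decide)

theorem eq_of_sprout_suffix_sprout {n k : ℕ} (h : sprout n <:+ sprout k) : n = k := by
  rcases List.suffix_cons_iff.1 h with h | h
  · simpa [sprout, spine] using congrArg List.length h
  · exact absurd h (not_sprout_suffix_spine n k)

def cutOffBlock (n : ℕ) : Set (List (Fin 7)) := insert (spine n) (subtree (sprout n))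

theorem spine_notMem_subtree_sprout (n k : ℕ) : spine k ∉ subtree (sprout n) :=
  not_sprout_suffix_spine n k

theorem pairwise_disjoint_cutOffBlock : Pairwise (Disjoint on cutOffBlock) := by
  intro n k hnk
  have h_spine : spine n ≠ spine k := fun h ↦ hnk (by simpa [spine] using h)
  have h_sprout : Disjoint (subtree (sprout n)) (subtree (sprout k)) :=
    disjoint_subtree (fun h ↦ hnk (eq_of_sprout_suffix_sprout h))
      (fun h ↦ hnk (eq_of_sprout_suffix_sprout h).symm)
  simp only [onFun, cutOffBlock, Set.disjoint_insert_left, Set.disjoint_insert_right,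
    Set.mem_insert_iff, not_or]
  exact ⟨⟨h_spine.symm, spine_notMem_subtree_sprout n k⟩, spine_notMem_subtree_sprout k n,
    h_sprout⟩

def cutOffSurvivor (n : ℕ) : Set (List (Fin 7) → Bool) :=
  {ω | ω (spine n) = false} ∩ {ω | ∀ m, ReachesDepth ω (sprout n) m}

theorem measurableSet_cutOffSurvivor (n : ℕ) :
    MeasurableSet[cylinderEvents (cutOffBlock n)] (cutOffSurvivor n) :=
  (measurableSet_setOf_eq_cylinderEvents (Set.mem_insert _ _) false).inter
    (cylinderEvents_mono (Set.subset_insert _ _) _ (measurableSet_forall_reachesDepth (sprout n)))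

variable {p : ℝ≥0∞} {hp : p ≤ 1} {μ : Measure (List (Fin 7) → Bool)}
  (hμ : IsProjectiveLimit μ (bernoulliPiFamily (List (Fin 7)) p hp))
include hμ

theorem iIndepSet_cutOffSurvivor : iIndepSet cutOffSurvivor μ :=
  (iIndepSet_iff_iIndep _ _).2 <| iIndep_of_iIndep_of_le
    (iIndep_cylinderEvents hμ pairwise_disjoint_cutOffBlock) fun n ↦
      MeasurableSpace.generateFrom_le fun _ h ↦ h ▸ measurableSet_cutOffSurvivor n

theorem measure_cutOffSurvivor (n : ℕ) :
    μ (cutOffSurvivor n) = (1 - p) * μ {ω | ∀ m, ReachesDepth ω (sprout n) m} := by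
  have h_disj : Disjoint {spine n} (subtree (sprout n)) :=
    Set.disjoint_singleton_left.2 (spine_notMem_subtree_sprout n n)
  rw [cutOffSurvivor, (Indep_iff _ _ μ).1 (indep_cylinderEvents hμ h_disj) _ _
    (measurableSet_setOf_eq_cylinderEvents (Set.mem_singleton _) false)
    (measurableSet_forall_reachesDepth (sprout n)), measure_setOf_closed hμ]

theorem measure_limsup_cutOffSurvivor (hp₁ : 1 / 7 < p) (hp₂ : p < 1) :
    μ (limsup cutOffSurvivor atTop) = 1 := by
  obtain ⟨c, hc₀, hcp, hc⟩ := exists_le_mul_one_sub_one_sub_pow_seven hp₁ hp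
  have h_pos : (1 - p) * c ≠ 0 := mul_ne_zero (tsub_pos_of_lt hp₂).ne' hc₀
  refine measure_limsup_eq_one (fun n ↦ cylinderEvents_le_pi _ (measurableSet_cutOffSurvivor n))
    (iIndepSet_cutOffSurvivor hμ) (top_le_iff.1 ?_)
  calc ∞ = ∑' _ : ℕ, (1 - p) * c := (ENNReal.tsum_const_eq_top_of_ne_zero h_pos).symm
    _ ≤ ∑' n, μ (cutOffSurvivor n) := ENNReal.tsum_le_tsum fun n ↦ by
      rw [measure_cutOffSurvivor hμ]
      exact mul_le_mul_right (le_measure_forall_reachesDepth hμ hcp hc (sprout n)) _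

end CutOffSurvivors

section OpenClusters

theorem treeGraph_adj_iff {u v : List (Fin 7)} :
    treeGraph.Adj u v ↔ (∃ a, u = a :: v) ∨ ∃ a, v = a :: u := by
  rw [treeGraph, SimpleGraph.fromRel_adj, and_iff_right_iff_imp]
  rintro (⟨a, rfl⟩ | ⟨a, rfl⟩) <;> simp

variable {ω : List (Fin 7) → Bool}

-- The only tree edge leaving `subtree (a :: r)` leads to the closed vertex `r`.
theorem cons_suffix_of_reachable {a : Fin 7} {r : List (Fin 7)} (hr : ω r = false)
    {x y : {v | ω v = true}} (hxy : (treeGraph.induce {v | ω v = true}).Reachable x y)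
    (hx : a :: r <:+ x.1) : a :: r <:+ y.1 := by
  obtain ⟨w⟩ := hxy
  induction w with
  | nil => exact hx
  | @cons x y z hxy _ ih =>
    refine ih ?_
    rcases treeGraph_adj_iff.1 hxy with ⟨b, hb : x.1 = b :: y.1⟩ | ⟨b, hb : y.1 = b :: x.1⟩
    · rw [hb] at hx
      rcases List.suffix_cons_iff.1 hx with h | h
      · have : y.1 = r := (List.cons.inj h).2.symm
        exact absurd (this ▸ y.2) (by simp [hr])
      · exact h
    · exact hb ▸ hx.trans (List.suffix_cons b _)

theorem exists_reachable_length_eq_of_reachesDepth {u : List (Fin 7)} {m : ℕ}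
    (h : ReachesDepth ω u m) : ∃ v : {v | ω v = true}, v.1.length = u.length + m ∧
      (treeGraph.induce {v | ω v = true}).Reachable v ⟨u, h.apply_eq_true⟩ := by
  induction m generalizing u with
  | zero => exact ⟨⟨u, h.apply_eq_true⟩, rfl, .rfl⟩
  | succ m ih =>
    obtain ⟨hu, a, ha⟩ := h
    obtain ⟨v, hv, hvu⟩ := ih ha
    have h_adj :
        (treeGraph.induce {v | ω v = true}).Adj ⟨a :: u, ha.apply_eq_true⟩ ⟨u, hu⟩ :=
      treeGraph_adj_iff.2 (.inl ⟨a, rfl⟩)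
    exact ⟨v, by simp [hv]; omega, hvu.trans h_adj.reachable⟩

theorem connectedComponentMk_supp_infinite {u : List (Fin 7)} (hu : ω u = true)
    (h : ∀ m, ReachesDepth ω u m) :
    ((treeGraph.induce {v | ω v = true}).connectedComponentMk ⟨u, hu⟩).supp.Infinite := by
  refine Set.Infinite.of_image (fun v ↦ v.1.length) ((Set.Ici_infinite u.length).mono ?_)
  intro k (hk : u.length ≤ k)
  obtain ⟨v, hv, hvu⟩ := exists_reachable_length_eq_of_reachesDepth (h (k - u.length))
  exact ⟨v, SimpleGraph.ConnectedComponent.sound hvu, by simp only at hv ⊢; omega⟩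

theorem infinite_setOf_supp_infinite_of_cutOffSurvivor
    (h : {n | ω ∈ cutOffSurvivor n}.Infinite) :
    {c : (treeGraph.induce {v | ω v = true}).ConnectedComponent | c.supp.Infinite}.Infinite := by
  have h_open (n : ℕ) (hn : ω ∈ cutOffSurvivor n) : ω (sprout n) = true :=
    (hn.2 0).apply_eq_true
  have := h.to_subtype
  refine Set.infinite_of_injective_forall_mem
    (f := fun n : {n | ω ∈ cutOffSurvivor n} ↦
      (treeGraph.induce {v | ω v = true}).connectedComponentMk ⟨sprout n, h_open n n.2⟩) ?_
    fun n ↦ connectedComponentMk_supp_infinite _ n.2.2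
  intro n k hnk
  exact Subtype.ext <| eq_of_sprout_suffix_sprout <|
    cons_suffix_of_reachable n.2.1 (SimpleGraph.ConnectedComponent.exact hnk) (List.suffix_refl _)

end OpenClusters

end SitePercolation

open SitePercolation

/-- **Non-uniqueness on the rooted 7-ary tree.**
For Bernoulli(`p`) site percolation `μ_p` on the rooted 7-ary tree `T`, for every `p`
with `1/7 < p < 1`, almost surely the set of infinite connected components of the
open subgraph of `T` is infinite. -/
theorem stmt_10 (p : ℝ≥0∞) (hp₁ : 1 / 7 < p) (hp₂ : p < 1)
    (μ : Measure (List (Fin 7) → Bool))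
    (hμ : IsProjectiveLimit μ (bernoulliPiFamily (List (Fin 7)) p hp₂.le)) :
    μ {ω | {c : (treeGraph.induce {v | ω v = true}).ConnectedComponent |
        c.supp.Infinite}.Infinite} = 1 := by
  have := isProbabilityMeasure_bernoulli hμ
  refine le_antisymm prob_le_one ?_
  calc 1 = μ (limsup cutOffSurvivor atTop) := (measure_limsup_cutOffSurvivor hμ hp₁ hp₂).symm
    _ ≤ _ := measure_mono fun ω hω ↦ infinite_setOf_supp_infinite_of_cutOffSurvivor <|
      Nat.frequently_atTop_iff_infinite.1 (mem_limsup_iff_frequently_mem.1 hω)
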